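/- Let F₀ be a CDF on [0,M], φ strictly convex and C¹, α ∈ (0,1), ε > 0. Define V̲_α = inf{ D ∈ [0, F₀⁻¹(α)) : ∫_{F₀(D)}^α B_φ(D, F₀⁻¹(t)) dt ≤ ε }. Then inf_{F ∈ 𝓑(F₀,ε)} F⁻¹(α) = V̲_α, and this infimum is attained by some F* ∈ 𝓑(F₀,ε). -/

import Mathlib

open Set MeasureTheory Filter

/-- `F` is a CDF with support contained in `[0,M]`. -/
def IsCDFOn (F : ℝ → ℝ) (M : ℝ) : Prop :=
  Monotone F ∧ (∀ x < (0:ℝ), F x = 0) ∧ (∀ x, M ≤ x → F x = 1) ∧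
    ∀ x, ContinuousWithinAt F (Set.Ici x) x

/-- Left-continuous quantile function (`VaR` at level `t`). -/
noncomputable def quantile (F : ℝ → ℝ) (t : ℝ) : ℝ :=
  sInf {z | t ≤ F z}

/-- Bregman divergence with generator `φ`. -/
noncomputable def Bdiv (φ : ℝ → ℝ) (x y : ℝ) : ℝ :=
  φ x - φ y - deriv φ y * (x - y)

section aux

variable {φ F F₀ : ℝ → ℝ} {M ε α : ℝ}

lemma cdf_nonneg (hF : IsCDFOn F M) (x : ℝ) : 0 ≤ F x := by
  have h0 : F (x - |x| - 1) = 0 := hF.2.1 _ (by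
    have := abs_nonneg x; have := le_abs_self x; linarith)
  have := hF.1 (show x - |x| - 1 ≤ x by have := abs_nonneg x; have := le_abs_self x; linarith)
  linarith

lemma cdf_le_one (hF : IsCDFOn F M) (x : ℝ) : F x ≤ 1 := by
  have h1 : F (max x M) = 1 := hF.2.2.1 _ (le_max_right _ _)
  have := hF.1 (le_max_left x M)
  linarith

lemma quantile_set_nonempty (hF : IsCDFOn F M) {t : ℝ} (ht1 : t ≤ 1) :
    {z | t ≤ F z}.Nonempty :=
  ⟨M, by simpa [hF.2.2.1 M le_rfl] using ht1⟩

lemma quantile_set_bddBelow (hF : IsCDFOn F M) {t : ℝ} (ht0 : 0 < t) :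
    BddBelow {z | t ≤ F z} := by
  refine ⟨0, fun z hz => ?_⟩
  by_contra h
  push_neg at h
  have := hF.2.1 z h
  simp only [mem_setOf_eq, this] at hz
  linarith

lemma quantile_nonneg (hF : IsCDFOn F M) {t : ℝ} (ht0 : 0 < t) : 0 ≤ quantile F t := by
  rcases Set.eq_empty_or_nonempty {z | t ≤ F z} with h | h
  · simp [quantile, h, Real.sInf_empty]
  · exact le_csInf h (fun z hz => by
      by_contra hc
      push_neg at hc
      have := hF.2.1 z hc
      simp only [mem_setOf_eq, this] at hz; linarith)

lemma quantile_le_of_le (hF : IsCDFOn F M) {t x : ℝ} (ht0 : 0 < t) (h : t ≤ F x) :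
    quantile F t ≤ x :=
  csInf_le (quantile_set_bddBelow hF ht0) h

lemma quantile_le_M (hF : IsCDFOn F M) {t : ℝ} (ht0 : 0 < t) (ht1 : t ≤ 1) :
    quantile F t ≤ M :=
  quantile_le_of_le hF ht0 (by simpa [hF.2.2.1 M le_rfl] using ht1)

lemma le_quantile_of_lt (hF : IsCDFOn F M) {t x : ℝ} (h : F x < t) (ht1 : t ≤ 1) :
    x ≤ quantile F t := by
  refine le_csInf (quantile_set_nonempty hF ht1) (fun z hz => ?_)
  by_contra hc
  push_neg at hc
  exact absurd hz (by simp only [mem_setOf_eq, not_le]; exact lt_of_le_of_lt (hF.1 hc.le) h)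

lemma quantile_mono (hF : IsCDFOn F M) {t t' : ℝ} (ht0 : 0 < t) (h : t ≤ t') (ht1 : t' ≤ 1) :
    quantile F t ≤ quantile F t' :=
  csInf_le_csInf (quantile_set_bddBelow hF ht0) (quantile_set_nonempty hF ht1)
    (fun z hz => le_trans h hz)

/-- Monotone global surrogate for the quantile function. -/
noncomputable def qmon (F : ℝ → ℝ) (t : ℝ) : ℝ := quantile F (min t 1)

lemma qmon_eq (t : ℝ) (ht : t ≤ 1) : qmon F t = quantile F t := by
  simp [qmon, min_eq_left ht]

lemma quantile_eq_zero_of_nonpos (hF : IsCDFOn F M) {t : ℝ} (ht : t ≤ 0) :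
    quantile F t = 0 := by
  have : ¬ BddBelow {z | t ≤ F z} := by
    intro ⟨b, hb⟩
    have hm : min b 0 - 1 ∈ {z | t ≤ F z} := by
      have : F (min b 0 - 1) = 0 := hF.2.1 _ (by have := min_le_right b 0; linarith)
      simp [mem_setOf_eq, this, ht]
    have := hb hm
    have := min_le_left b 0
    linarith
  simp [quantile, Real.sInf_of_not_bddBelow this]

lemma qmon_mono (hF : IsCDFOn F M) : Monotone (qmon F) := by
  intro t t' h
  rcases le_or_gt (min t 1) 0 with h0 | h0
  · rw [qmon, quantile_eq_zero_of_nonpos hF h0]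
    rcases le_or_gt (min t' 1) 0 with h0' | h0'
    · rw [qmon, quantile_eq_zero_of_nonpos hF h0']
    · exact quantile_nonneg hF h0'
  · exact quantile_mono hF h0 (min_le_min h le_rfl) (min_le_right _ _)

lemma qmon_measurable (hF : IsCDFOn F M) : Measurable (qmon F) :=
  (qmon_mono hF).measurable

end aux
section bdiv

variable {φ : ℝ → ℝ}

lemma Bdiv_self (x : ℝ) : Bdiv φ x x = 0 := by simp [Bdiv]

lemma Bdiv_nonneg (hφc : ConvexOn ℝ Set.univ φ) (hd : Differentiable ℝ φ) (x y : ℝ) :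
    0 ≤ Bdiv φ x y := by
  rcases lt_trichotomy x y with h | h | h
  · have hs := hφc.slope_le_deriv (mem_univ x) (mem_univ y) h (hd y)
    rw [slope_def_field] at hs
    have hxy : (0:ℝ) < y - x := by linarith
    rw [div_le_iff₀ hxy] at hs
    simp only [Bdiv]; nlinarith
  · subst h; simp [Bdiv]
  · have hs := hφc.deriv_le_slope (mem_univ y) (mem_univ x) h (hd y)
    rw [slope_def_field] at hs
    have hxy : (0:ℝ) < x - y := by linarith
    rw [le_div_iff₀ hxy] at hs
    simp only [Bdiv]; nlinarith

lemma Bdiv_anti (hφc : ConvexOn ℝ Set.univ φ) (hd : Differentiable ℝ φ)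
    {x x' y : ℝ} (h1 : x ≤ x') (h2 : x' ≤ y) : Bdiv φ x' y ≤ Bdiv φ x y := by
  rcases eq_or_lt_of_le h1 with rfl | h1
  · exact le_rfl
  · have hs := hφc.slope_le_deriv (mem_univ x) (mem_univ x') h1 (hd x')
    rw [slope_def_field] at hs
    have hmono : deriv φ x' ≤ deriv φ y := by
      have := hφc.monotoneOn_deriv (fun z _ => hd z)
      exact this (mem_univ x') (mem_univ y) h2
    have hxy : (0:ℝ) < x' - x := by linarith
    rw [div_le_iff₀ hxy] at hs
    simp only [Bdiv]; nlinarith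

end bdiv
section integ

variable {φ : ℝ → ℝ}

lemma measurable_Bdiv_comp (hφc : Continuous φ) (hφ' : Continuous (deriv φ))
    {u v : ℝ → ℝ} (hu : Measurable u) (hv : Measurable v) :
    Measurable (fun t => Bdiv φ (u t) (v t)) := by
  simp only [Bdiv]
  exact ((hφc.measurable.comp hu).sub (hφc.measurable.comp hv)).sub
    (((hφ'.measurable.comp hv)).mul (hu.sub hv))

lemma integrableOn_Bdiv_comp (hφc : Continuous φ) (hφ' : Continuous (deriv φ))
    {u v : ℝ → ℝ} (hu : Measurable u) (hv : Measurable v)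
    {s : Set ℝ} (hs : MeasurableSet s) (hfin : volume s ≠ ⊤) {C : ℝ}
    (hb : ∀ t ∈ s, |Bdiv φ (u t) (v t)| ≤ C) :
    IntegrableOn (fun t => Bdiv φ (u t) (v t)) s := by
  have hmeas := measurable_Bdiv_comp hφc hφ' hu hv
  haveI : IsFiniteMeasure (volume.restrict s) :=
    ⟨by rwa [Measure.restrict_apply_univ, lt_top_iff_ne_top]⟩
  refine ⟨hmeas.aestronglyMeasurable, HasFiniteIntegral.of_bounded (C := C) ?_⟩
  rw [ae_restrict_iff' hs]
  exact ae_of_all _ (fun t ht => by simpa [Real.norm_eq_abs] using hb t ht)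

end integ
/-- `F` belongs to the Bregman–Wasserstein ball of radius `ε` around `F₀`. -/
noncomputable def InBWBall (φ F₀ F : ℝ → ℝ) (M ε : ℝ) : Prop :=
  IsCDFOn F M ∧
    (∫ t in Set.Ioo (0:ℝ) 1, Bdiv φ (quantile F t) (quantile F₀ t)) ≤ ε

/-- The best-case VaR threshold `V̲_α`. -/
noncomputable def Vlow (φ F₀ : ℝ → ℝ) (ε α : ℝ) : ℝ :=
  sInf {D : ℝ | D ∈ Set.Ico 0 (quantile F₀ α) ∧
    (∫ t in Set.Ioc (F₀ D) α, Bdiv φ D (quantile F₀ t)) ≤ ε}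

/-- the best-case `α`-quantile over the BW ball equals `V̲_α`
and the infimum is attained. -/
theorem inf_var_eq_Vlow (M ε α : ℝ) (hM : 0 < M) (hε : 0 < ε)
    (hα : α ∈ Set.Ioo (0:ℝ) 1) (φ F₀ : ℝ → ℝ)
    (hφ : StrictConvexOn ℝ Set.univ φ) (hφd : ContDiff ℝ 1 φ)
    (hF₀ : IsCDFOn F₀ M) :
    sInf {v : ℝ | ∃ F : ℝ → ℝ, InBWBall φ F₀ F M ε ∧ v = quantile F α} =
      Vlow φ F₀ ε α ∧
    ∃ F : ℝ → ℝ, InBWBall φ F₀ F M ε ∧ quantile F α = Vlow φ F₀ ε α := by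
  obtain ⟨hα0, hα1⟩ := hα
  have hd : Differentiable ℝ φ := hφd.differentiable one_ne_zero
  have hφc : ConvexOn ℝ Set.univ φ := hφ.convexOn
  have hcont : Continuous φ := hφd.continuous
  have hcd : Continuous (deriv φ) := hφd.continuous_deriv le_rfl
  -- bounds for φ and deriv φ on [0, M]
  obtain ⟨L₀, hL₀⟩ := (isCompact_Icc (a := (0:ℝ)) (b := M)).exists_bound_of_continuousOn
    hcd.continuousOn
  obtain ⟨P₀, hP₀⟩ := (isCompact_Icc (a := (0:ℝ)) (b := M)).exists_bound_of_continuousOn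
    hcont.continuousOn
  set L : ℝ := max L₀ 0 with hLdef
  set P : ℝ := max P₀ 0 with hPdef
  have hL0 : 0 ≤ L := le_max_right _ _
  have hP0 : 0 ≤ P := le_max_right _ _
  have hL : ∀ y ∈ Set.Icc (0:ℝ) M, |deriv φ y| ≤ L :=
    fun y hy => le_trans (hL₀ y hy) (le_max_left _ _)
  have hP : ∀ y ∈ Set.Icc (0:ℝ) M, |φ y| ≤ P :=
    fun y hy => le_trans (hP₀ y hy) (le_max_left _ _)
  have hLip : ∀ x ∈ Set.Icc (0:ℝ) M, ∀ y ∈ Set.Icc (0:ℝ) M, |φ x - φ y| ≤ L * |x - y| := by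
    intro x hx y hy
    have := Convex.norm_image_sub_le_of_norm_deriv_le
      (f := φ) (s := Set.Icc (0:ℝ) M)
      (fun z _ => hd z)
      (fun z hz => by simpa [Real.norm_eq_abs] using hL z hz)
      (convex_Icc _ _) hy hx
    simpa [Real.norm_eq_abs] using this
  set C : ℝ := 2 * P + L * M with hCdef
  have hC0 : 0 ≤ C := by positivity
  have hBb : ∀ x ∈ Set.Icc (0:ℝ) M, ∀ y ∈ Set.Icc (0:ℝ) M, |Bdiv φ x y| ≤ C := by
    intro x hx y hy
    have h1 := hP x hx
    have h2 := hP y hy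
    have h3 := hL y hy
    have h4 : |x - y| ≤ M := by
      rw [abs_sub_le_iff]
      constructor <;> [skip; skip] <;> obtain ⟨hx1, hx2⟩ := hx <;> obtain ⟨hy1, hy2⟩ := hy <;>
        linarith
    calc |Bdiv φ x y| ≤ |φ x| + |φ y| + |deriv φ y| * |x - y| := by
          simp only [Bdiv]
          have := abs_mul (deriv φ y) (x - y)
          have h5 := abs_sub (φ x) (φ y)
          have := abs_sub_abs_le_abs_sub (φ x) (φ y)
          calc |φ x - φ y - deriv φ y * (x - y)| ≤ |φ x - φ y| + |deriv φ y * (x - y)| :=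
                abs_sub _ _
            _ ≤ |φ x| + |φ y| + |deriv φ y| * |x - y| := by
                rw [abs_mul]
                have := abs_sub (φ x) (φ y)
                have h6 : |φ x - φ y| ≤ |φ x| + |φ y| := abs_sub _ _
                linarith
      _ ≤ P + P + L * M := by
          have : |deriv φ y| * |x - y| ≤ L * M :=
            mul_le_mul h3 h4 (abs_nonneg _) hL0
          linarith
      _ = C := by rw [hCdef]; ring
  -- basic CDF facts
  have hF0nn : ∀ x, 0 ≤ F₀ x := cdf_nonneg hF₀
  have hF0le : ∀ x, F₀ x ≤ 1 := cdf_le_one hF₀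
  have hqα0 : 0 ≤ quantile F₀ α := quantile_nonneg hF₀ hα0
  have hqαM : quantile F₀ α ≤ M := quantile_le_M hF₀ hα0 hα1.le
  have hDltα : ∀ {D : ℝ}, D < quantile F₀ α → F₀ D < α := by
    intro D hD
    by_contra h
    push_neg at h
    exact absurd (quantile_le_of_le hF₀ hα0 h) (not_le.2 hD)
  have hIocSub : ∀ {D : ℝ}, 0 ≤ D → Set.Ioc (F₀ D) α ⊆ Set.Ioo (0:ℝ) 1 := by
    intro D hD t ht
    exact ⟨lt_of_le_of_lt (hF0nn D) ht.1, lt_of_le_of_lt ht.2 hα1⟩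
  have hq0b : ∀ G : ℝ → ℝ, IsCDFOn G M → ∀ t ∈ Set.Ioo (0:ℝ) 1,
      quantile G t ∈ Set.Icc (0:ℝ) M := by
    intro G hG t ht
    exact ⟨quantile_nonneg hG ht.1, quantile_le_M hG ht.1 ht.2.le⟩
  -- integrability facts
  have hIntMain : ∀ (u v : ℝ → ℝ), Monotone u → Monotone v →
      (∀ t ∈ Set.Ioo (0:ℝ) 1, u t ∈ Set.Icc (0:ℝ) M) →
      (∀ t ∈ Set.Ioo (0:ℝ) 1, v t ∈ Set.Icc (0:ℝ) M) →
      ∀ s : Set ℝ, MeasurableSet s → s ⊆ Set.Ioo (0:ℝ) 1 →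
      IntegrableOn (fun t => Bdiv φ (u t) (v t)) s := by
    intro u v hu hv hub hvb s hs hsub
    refine integrableOn_Bdiv_comp hcont hcd hu.measurable hv.measurable hs ?_ (C := C) ?_
    · exact ne_top_of_le_ne_top (by simp [Real.volume_Ioo]) (measure_mono hsub)
    · intro t ht
      exact hBb _ (hub t (hsub ht)) _ (hvb t (hsub ht))
  have hIntD : ∀ D ∈ Set.Icc (0:ℝ) M, ∀ s : Set ℝ, MeasurableSet s → s ⊆ Set.Ioo (0:ℝ) 1 →
      IntegrableOn (fun t => Bdiv φ D (quantile F₀ t)) s := by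
    intro D hD s hs hsub
    refine (hIntMain (fun _ => D) (qmon F₀) monotone_const (qmon_mono hF₀)
      (fun t _ => hD) (fun t ht => by rw [qmon_eq t ht.2.le]; exact hq0b F₀ hF₀ t ht)
      s hs hsub).congr_fun ?_ hs
    intro t ht
    simp only [qmon_eq t (hsub ht).2.le]
  have hIntF : ∀ F : ℝ → ℝ, IsCDFOn F M → ∀ s : Set ℝ, MeasurableSet s →
      s ⊆ Set.Ioo (0:ℝ) 1 →
      IntegrableOn (fun t => Bdiv φ (quantile F t) (quantile F₀ t)) s := by
    intro F hF s hs hsub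
    refine (hIntMain (qmon F) (qmon F₀) (qmon_mono hF) (qmon_mono hF₀)
      (fun t ht => by rw [qmon_eq t ht.2.le]; exact hq0b F hF t ht)
      (fun t ht => by rw [qmon_eq t ht.2.le]; exact hq0b F₀ hF₀ t ht)
      s hs hsub).congr_fun ?_ hs
    intro t ht
    simp only [qmon_eq t (hsub ht).2.le]
  -- the feasible set defining `Vlow`
  set S : Set ℝ := {D : ℝ | D ∈ Set.Ico 0 (quantile F₀ α) ∧
    (∫ t in Set.Ioc (F₀ D) α, Bdiv φ D (quantile F₀ t)) ≤ ε} with hSdef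
  have hVeq : Vlow φ F₀ ε α = sInf S := rfl
  have hSbdd : BddBelow S := ⟨0, fun D hD => hD.1.1⟩
  -- the set of attainable values
  set T : Set ℝ := {v : ℝ | ∃ F : ℝ → ℝ, InBWBall φ F₀ F M ε ∧ v = quantile F α} with hTdef
  have hTlb0 : ∀ v ∈ T, (0:ℝ) ≤ v := by
    rintro v ⟨F, hF, rfl⟩
    exact quantile_nonneg hF.1 hα0
  rcases eq_or_lt_of_le hqα0 with hq0 | hq0
  · -- degenerate case: quantile F₀ α = 0
    have hSempty : S = ∅ := by
      rw [hSdef]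
      ext D
      simp only [Set.mem_setOf_eq, Set.mem_Ico, Set.mem_empty_iff_false, iff_false]
      rintro ⟨⟨h1, h2⟩, -⟩
      rw [← hq0] at h2
      linarith
    have hV0 : Vlow φ F₀ ε α = 0 := by rw [hVeq, hSempty, Real.sInf_empty]
    have hF₀ball : InBWBall φ F₀ F₀ M ε := by
      refine ⟨hF₀, ?_⟩
      have : (∫ t in Set.Ioo (0:ℝ) 1, Bdiv φ (quantile F₀ t) (quantile F₀ t)) = 0 := by
        simp [Bdiv_self]
      rw [this]; exact hε.le
    have hmem : (0:ℝ) ∈ T := ⟨F₀, hF₀ball, hq0⟩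
    refine ⟨?_, F₀, hF₀ball, by rw [hV0, ← hq0]⟩
    rw [hV0]
    exact le_antisymm (csInf_le ⟨0, hTlb0⟩ hmem) (le_csInf ⟨0, hmem⟩ hTlb0)
  · -- main case: 0 < quantile F₀ α
    -- Step 1 : S is nonempty
    have hSne : S.Nonempty := by
      set d : ℝ := min (quantile F₀ α) (ε / (2 * L + 1)) with hddef
      have hd0 : 0 < d := lt_min hq0 (by positivity)
      have hd1 : d ≤ ε / (2 * L + 1) := min_le_right _ _
      have hd2 : d ≤ quantile F₀ α := min_le_left _ _
      set D₀ : ℝ := quantile F₀ α - d with hD₀def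
      have hD₀0 : 0 ≤ D₀ := by rw [hD₀def]; linarith
      have hD₀lt : D₀ < quantile F₀ α := by rw [hD₀def]; linarith
      have hD₀M : D₀ ≤ M := le_trans hD₀lt.le hqαM
      have hFD₀ : F₀ D₀ < α := hDltα hD₀lt
      refine ⟨D₀, ⟨⟨hD₀0, hD₀lt⟩, ?_⟩⟩
      have hpt : ∀ t ∈ Set.Ioc (F₀ D₀) α, Bdiv φ D₀ (quantile F₀ t) ≤ 2 * L * d := by
        intro t ht
        have ht' : t ∈ Set.Ioo (0:ℝ) 1 := hIocSub hD₀0 ht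
        have hy1 : D₀ ≤ quantile F₀ t := le_quantile_of_lt hF₀ ht.1 ht'.2.le
        have hy2 : quantile F₀ t ≤ quantile F₀ α := quantile_mono hF₀ ht'.1 ht.2 hα1.le
        have hyI : quantile F₀ t ∈ Set.Icc (0:ℝ) M := hq0b F₀ hF₀ t ht'
        have h1 : |φ D₀ - φ (quantile F₀ t)| ≤ L * |D₀ - quantile F₀ t| :=
          hLip _ ⟨hD₀0, hD₀M⟩ _ hyI
        have h2 : |deriv φ (quantile F₀ t)| ≤ L := hL _ hyI
        have h3 : |D₀ - quantile F₀ t| ≤ d := by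
          rw [abs_sub_comm, abs_of_nonneg (by linarith)]
          rw [hD₀def] at hy1 ⊢
          linarith
        have h4 : |deriv φ (quantile F₀ t) * (D₀ - quantile F₀ t)| ≤ L * d := by
          rw [abs_mul]; exact mul_le_mul h2 h3 (abs_nonneg _) hL0
        have h5 : |φ D₀ - φ (quantile F₀ t)| ≤ L * d :=
          le_trans h1 (mul_le_mul_of_nonneg_left h3 hL0)
        have h6 : |Bdiv φ D₀ (quantile F₀ t)| ≤ L * d + L * d := by
          simp only [Bdiv]
          exact le_trans (abs_sub _ _) (add_le_add h5 h4)
        have := le_trans (le_abs_self _) h6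
        linarith
      have hint1 : IntegrableOn (fun t => Bdiv φ D₀ (quantile F₀ t)) (Set.Ioc (F₀ D₀) α) :=
        hIntD D₀ ⟨hD₀0, hD₀M⟩ _ measurableSet_Ioc (hIocSub hD₀0)
      have hint2 : IntegrableOn (fun _ : ℝ => 2 * L * d) (Set.Ioc (F₀ D₀) α) := by
        refine (integrableOn_const_iff).2 (Or.inr ?_)
        rw [Real.volume_Ioc]
        exact ENNReal.ofReal_lt_top
      have hr : ε / (2 * L + 1) * (2 * L + 1) = ε := div_mul_cancel₀ _ (by positivity)
      calc (∫ t in Set.Ioc (F₀ D₀) α, Bdiv φ D₀ (quantile F₀ t))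
          ≤ ∫ _ in Set.Ioc (F₀ D₀) α, 2 * L * d :=
            setIntegral_mono_on hint1 hint2 measurableSet_Ioc hpt
        _ = (α - F₀ D₀) * (2 * L * d) := by
            rw [setIntegral_const, Real.volume_real_Ioc_of_le (by linarith)]
            simp [smul_eq_mul]
        _ ≤ 2 * L * d := by
            have h1 : 0 ≤ 2 * L * d := by positivity
            have h2 : α - F₀ D₀ ≤ 1 := by have := hF0nn D₀; linarith
            exact mul_le_of_le_one_left h1 h2
        _ ≤ ε := by nlinarith [mul_le_mul_of_nonneg_left hd1 (by positivity : (0:ℝ) ≤ 2 * L)]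
    obtain ⟨D₀, hD₀⟩ := hSne
    have hV0 : 0 ≤ sInf S := le_csInf ⟨D₀, hD₀⟩ (fun D hD => hD.1.1)
    have hVlt : sInf S < quantile F₀ α := lt_of_le_of_lt (csInf_le hSbdd hD₀) hD₀.1.2
    have hVM : sInf S ≤ M := le_trans hVlt.le hqαM
    -- Step 2 : the infimum belongs to S
    have hhelp : ∀ a x : ℝ, 0 ≤ a → 0 < x → a * (x / (2 * (a + 1))) ≤ x / 2 := by
      intro a x ha hx
      rw [← mul_div_assoc, div_le_div_iff₀ (by positivity) (by norm_num)]
      nlinarith [mul_nonneg ha hx.le]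
    have hVmem : sInf S ∈ S := by
      refine ⟨⟨hV0, hVlt⟩, ?_⟩
      refine le_of_forall_pos_le_add ?_
      intro η hη
      have hcwa : ContinuousWithinAt F₀ (Set.Ici (sInf S)) (sInf S) := hF₀.2.2.2 _
      rw [Metric.continuousWithinAt_iff] at hcwa
      obtain ⟨δ, hδ0, hδ⟩ := hcwa (η / (2 * (C + 1))) (by positivity)
      set θ : ℝ := min δ (η / (2 * (2 * L + 1))) with hθdef
      have hθ0 : 0 < θ := lt_min hδ0 (by positivity)
      have hθδ : θ ≤ δ := min_le_left _ _
      have hθη : θ ≤ η / (2 * (2 * L + 1)) := min_le_right _ _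
      obtain ⟨D, hDS, hDlt⟩ := Real.lt_sInf_add_pos ⟨D₀, hD₀⟩ hθ0
      have hVD : sInf S ≤ D := csInf_le hSbdd hDS
      have hD0 : 0 ≤ D := hDS.1.1
      have hDqα : D < quantile F₀ α := hDS.1.2
      have hDM : D ≤ M := le_trans hDqα.le hqαM
      have hFVD : F₀ (sInf S) ≤ F₀ D := hF₀.1 hVD
      have hFDα : F₀ D < α := hDltα hDqα
      have hFV0 : 0 ≤ F₀ (sInf S) := hF0nn _
      have hdist : |F₀ D - F₀ (sInf S)| < η / (2 * (C + 1)) := by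
        have h1 : dist D (sInf S) < δ := by
          rw [Real.dist_eq, abs_of_nonneg (by linarith)]
          linarith
        have := hδ (Set.mem_Ici.2 hVD) h1
        rwa [Real.dist_eq] at this
      have hsub1 : Set.Ioc (F₀ (sInf S)) (F₀ D) ⊆ Set.Ioo (0:ℝ) 1 := fun t ht =>
        ⟨lt_of_le_of_lt hFV0 ht.1, lt_of_le_of_lt (le_trans ht.2 hFDα.le) hα1⟩
      have int1 : IntegrableOn (fun t => Bdiv φ (sInf S) (quantile F₀ t))
          (Set.Ioc (F₀ (sInf S)) (F₀ D)) := hIntD _ ⟨hV0, hVM⟩ _ measurableSet_Ioc hsub1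
      have int2 : IntegrableOn (fun t => Bdiv φ (sInf S) (quantile F₀ t))
          (Set.Ioc (F₀ D) α) := hIntD _ ⟨hV0, hVM⟩ _ measurableSet_Ioc (hIocSub hD0)
      have hsplit : (∫ t in Set.Ioc (F₀ (sInf S)) α, Bdiv φ (sInf S) (quantile F₀ t))
          = (∫ t in Set.Ioc (F₀ (sInf S)) (F₀ D), Bdiv φ (sInf S) (quantile F₀ t))
            + ∫ t in Set.Ioc (F₀ D) α, Bdiv φ (sInf S) (quantile F₀ t) := by
        rw [← Set.Ioc_union_Ioc_eq_Ioc hFVD hFDα.le,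
          setIntegral_union (Set.Ioc_disjoint_Ioc_of_le le_rfl) measurableSet_Ioc int1 int2]
      have hterm1 : (∫ t in Set.Ioc (F₀ (sInf S)) (F₀ D), Bdiv φ (sInf S) (quantile F₀ t))
          ≤ η / 2 := by
        have hb : ∀ t ∈ Set.Ioc (F₀ (sInf S)) (F₀ D), ‖Bdiv φ (sInf S) (quantile F₀ t)‖ ≤ C := by
          intro t ht
          rw [Real.norm_eq_abs]
          exact hBb _ ⟨hV0, hVM⟩ _ (hq0b F₀ hF₀ t (hsub1 ht))
        have hnorm := norm_setIntegral_le_of_norm_le_const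
          (by rw [Real.volume_Ioc]; exact ENNReal.ofReal_lt_top) hb
        rw [Real.volume_real_Ioc_of_le (by linarith)] at hnorm
        have h2 := le_trans (le_abs_self _) (by rwa [Real.norm_eq_abs] at hnorm)
        have h3 : F₀ D - F₀ (sInf S) ≤ |F₀ D - F₀ (sInf S)| := le_abs_self _
        have h4 : C * (F₀ D - F₀ (sInf S)) ≤ C * (η / (2 * (C + 1))) :=
          mul_le_mul_of_nonneg_left (by linarith) hC0
        have h5 : C * (η / (2 * (C + 1))) ≤ η / 2 := hhelp C η hC0 hη
        exact le_trans h2 (le_trans h4 h5)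
      have hterm2 : (∫ t in Set.Ioc (F₀ D) α, Bdiv φ (sInf S) (quantile F₀ t))
          ≤ ε + η / 2 := by
        have hptw : ∀ t ∈ Set.Ioc (F₀ D) α,
            Bdiv φ (sInf S) (quantile F₀ t) ≤ Bdiv φ D (quantile F₀ t) + 2 * L * θ := by
          intro t ht
          have ht' : t ∈ Set.Ioo (0:ℝ) 1 := hIocSub hD0 ht
          have hyI := hq0b F₀ hF₀ t ht'
          have h1 : |φ (sInf S) - φ D| ≤ L * |sInf S - D| := hLip _ ⟨hV0, hVM⟩ _ ⟨hD0, hDM⟩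
          have h2 : |deriv φ (quantile F₀ t)| ≤ L := hL _ hyI
          have h3 : |sInf S - D| ≤ θ := by
            rw [abs_sub_comm, abs_of_nonneg (by linarith)]; linarith
          have h4 : |deriv φ (quantile F₀ t) * (sInf S - D)| ≤ L * θ := by
            rw [abs_mul]; exact mul_le_mul h2 h3 (abs_nonneg _) hL0
          have h5 : |φ (sInf S) - φ D| ≤ L * θ :=
            le_trans h1 (mul_le_mul_of_nonneg_left h3 hL0)
          have h6 : Bdiv φ (sInf S) (quantile F₀ t) - Bdiv φ D (quantile F₀ t)
              = φ (sInf S) - φ D - deriv φ (quantile F₀ t) * (sInf S - D) := by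
            simp only [Bdiv]; ring
          have h7 : φ (sInf S) - φ D - deriv φ (quantile F₀ t) * (sInf S - D) ≤ L * θ + L * θ :=
            le_trans (le_abs_self _) (le_trans (abs_sub _ _) (add_le_add h5 h4))
          linarith
        have intD : IntegrableOn (fun t => Bdiv φ D (quantile F₀ t)) (Set.Ioc (F₀ D) α) :=
          hIntD D ⟨hD0, hDM⟩ _ measurableSet_Ioc (hIocSub hD0)
        have intc : IntegrableOn (fun _ : ℝ => 2 * L * θ) (Set.Ioc (F₀ D) α) := by
          refine (integrableOn_const_iff).2 (Or.inr ?_)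
          rw [Real.volume_Ioc]; exact ENNReal.ofReal_lt_top
        calc (∫ t in Set.Ioc (F₀ D) α, Bdiv φ (sInf S) (quantile F₀ t))
            ≤ ∫ t in Set.Ioc (F₀ D) α, (Bdiv φ D (quantile F₀ t) + 2 * L * θ) :=
              setIntegral_mono_on int2 (intD.add intc) measurableSet_Ioc hptw
          _ = (∫ t in Set.Ioc (F₀ D) α, Bdiv φ D (quantile F₀ t))
                + (α - F₀ D) * (2 * L * θ) := by
              rw [integral_add intD intc, setIntegral_const,
                Real.volume_real_Ioc_of_le (by linarith)]
              simp [smul_eq_mul]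
          _ ≤ ε + η / 2 := by
              have hbud : (∫ t in Set.Ioc (F₀ D) α, Bdiv φ D (quantile F₀ t)) ≤ ε := hDS.2
              have h1 : 0 ≤ 2 * L * θ := by positivity
              have h2 : α - F₀ D ≤ 1 := by have := hF0nn D; linarith
              have h3 : (α - F₀ D) * (2 * L * θ) ≤ 2 * L * θ := mul_le_of_le_one_left h1 h2
              have h4 : 2 * L * θ ≤ η / 2 := by
                have h5 := mul_le_mul_of_nonneg_left hθη (by positivity : (0:ℝ) ≤ 2 * L)
                exact le_trans h5 (hhelp (2 * L) η (by positivity) hη)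
              linarith
      rw [hsplit]
      linarith
    -- Step 3 : lower bound for all attainable values
    have hTlb : ∀ v ∈ T, sInf S ≤ v := by
      rintro v ⟨F, ⟨hFcdf, hFint⟩, rfl⟩
      rcases lt_or_ge (quantile F α) (quantile F₀ α) with hv | hv
      · have hv0 : 0 ≤ quantile F α := quantile_nonneg hFcdf hα0
        have hvM : quantile F α ≤ M := le_trans hv.le hqαM
        refine csInf_le hSbdd ⟨⟨hv0, hv⟩, ?_⟩
        have hsub : Set.Ioc (F₀ (quantile F α)) α ⊆ Set.Ioo (0:ℝ) 1 := hIocSub hv0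
        have hint1 : IntegrableOn (fun t => Bdiv φ (quantile F α) (quantile F₀ t))
            (Set.Ioc (F₀ (quantile F α)) α) := hIntD _ ⟨hv0, hvM⟩ _ measurableSet_Ioc hsub
        have hint2 : IntegrableOn (fun t => Bdiv φ (quantile F t) (quantile F₀ t))
            (Set.Ioc (F₀ (quantile F α)) α) := hIntF F hFcdf _ measurableSet_Ioc hsub
        have hint3 : IntegrableOn (fun t => Bdiv φ (quantile F t) (quantile F₀ t))
            (Set.Ioo (0:ℝ) 1) := hIntF F hFcdf _ measurableSet_Ioo subset_rfl
        calc (∫ t in Set.Ioc (F₀ (quantile F α)) α, Bdiv φ (quantile F α) (quantile F₀ t))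
            ≤ ∫ t in Set.Ioc (F₀ (quantile F α)) α, Bdiv φ (quantile F t) (quantile F₀ t) := by
              refine setIntegral_mono_on hint1 hint2 measurableSet_Ioc ?_
              intro t ht
              have ht' := hsub ht
              have h1 : quantile F t ≤ quantile F α := quantile_mono hFcdf ht'.1 ht.2 hα1.le
              have h2 : quantile F α ≤ quantile F₀ t := le_quantile_of_lt hF₀ ht.1 ht'.2.le
              exact Bdiv_anti hφc hd h1 h2
          _ ≤ ∫ t in Set.Ioo (0:ℝ) 1, Bdiv φ (quantile F t) (quantile F₀ t) :=
              setIntegral_mono_set hint3 (ae_of_all _ (fun t => Bdiv_nonneg hφc hd _ _))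
                (HasSubset.Subset.eventuallyLE hsub)
          _ ≤ ε := hFint
      · exact le_trans (le_trans (csInf_le hSbdd hD₀) hD₀.1.2.le) hv
    -- Step 4 : construction of the attaining CDF
    have hattain : ∃ F : ℝ → ℝ, InBWBall φ F₀ F M ε ∧ quantile F α = sInf S := by
      set V := sInf S with hVdef
      set Fs : ℝ → ℝ := fun x => if x < V then F₀ x else max (F₀ x) α with hFs
      have hFVα : F₀ V < α := hDltα hVlt
      have hFsmono : Monotone Fs := by
        intro x y hxy
        by_cases hx : x < V
        · by_cases hy : y < V
          · simp only [hFs]; rw [if_pos hx, if_pos hy]; exact hF₀.1 hxy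
          · simp only [hFs]; rw [if_pos hx, if_neg hy]
            exact le_max_of_le_left (hF₀.1 hxy)
        · have hy : ¬ y < V := fun h => hx (lt_of_le_of_lt hxy h)
          simp only [hFs]; rw [if_neg hx, if_neg hy]
          exact max_le_max (hF₀.1 hxy) le_rfl
      have hFscdf : IsCDFOn Fs M := by
        refine ⟨hFsmono, ?_, ?_, ?_⟩
        · intro x hx
          have hxV : x < V := lt_of_lt_of_le hx hV0
          simp only [hFs]; rw [if_pos hxV]; exact hF₀.2.1 x hx
        · intro x hx
          have h1 : ¬ x < V := not_lt.2 (le_trans (le_trans hVlt.le hqαM) hx)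
          simp only [hFs]; rw [if_neg h1, hF₀.2.2.1 x hx]
          exact max_eq_left hα1.le
        · intro x₀
          by_cases hx : x₀ < V
          · refine (hF₀.2.2.2 x₀).congr_of_eventuallyEq ?_ ?_
            · filter_upwards [mem_nhdsWithin_of_mem_nhds (Iio_mem_nhds hx)] with x hxV
              simp only [hFs]; rw [if_pos (Set.mem_Iio.1 hxV)]
            · simp only [hFs]; rw [if_pos hx]
          · refine (ContinuousWithinAt.sup (hF₀.2.2.2 x₀)
              (continuousWithinAt_const (b := α))).congr_of_eventuallyEq ?_ ?_
            · filter_upwards [self_mem_nhdsWithin] with x hx'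
              have hxV : ¬ x < V := not_lt.2 (le_trans (not_lt.1 hx) hx')
              simp only [hFs]; rw [if_neg hxV]
            · simp only [hFs]; rw [if_neg hx]
      have hset1 : ∀ t : ℝ, F₀ V < t → t ≤ α → {z | t ≤ Fs z} = Set.Ici V := by
        intro t h1 h2
        ext z
        simp only [Set.mem_setOf_eq, Set.mem_Ici, hFs]
        constructor
        · intro hz
          by_contra hc
          push_neg at hc
          rw [if_pos hc] at hz
          exact absurd hz (not_le.2 (lt_of_le_of_lt (hF₀.1 hc.le) h1))
        · intro hz
          rw [if_neg (not_lt.2 hz)]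
          exact le_trans h2 (le_max_right _ _)
      have hqFsα : quantile Fs α = V := by
        rw [quantile, hset1 α hFVα le_rfl, csInf_Ici]
      have hqFs_eq : ∀ t : ℝ, (t ≤ F₀ V ∨ α < t) → quantile Fs t = quantile F₀ t := by
        intro t hcase
        unfold quantile
        congr 1
        ext z
        simp only [Set.mem_setOf_eq, hFs]
        by_cases hz : z < V
        · rw [if_pos hz]
        · rw [if_neg hz]
          rcases hcase with h | h
          · have hz' : t ≤ F₀ z := le_trans h (hF₀.1 (not_lt.1 hz))
            simp only [hz', iff_true]
            exact le_trans hz' (le_max_left _ _)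
          · rw [le_max_iff, or_iff_left (not_le.2 h)]
      have hIocSubV : Set.Ioc (F₀ V) α ⊆ Set.Ioo (0:ℝ) 1 := hIocSub hV0
      have hzero : ∀ t ∈ Set.Ioo (0:ℝ) 1 \ Set.Ioc (F₀ V) α,
          Bdiv φ (quantile Fs t) (quantile F₀ t) = 0 := by
        intro t ht
        obtain ⟨ht1, ht2⟩ := ht
        have hcase : t ≤ F₀ V ∨ α < t := by
          rcases le_or_gt t (F₀ V) with h | h
          · exact Or.inl h
          · rcases le_or_gt t α with h' | h'
            · exact absurd ⟨h, h'⟩ ht2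
            · exact Or.inr h'
        rw [hqFs_eq t hcase, Bdiv_self]
      have hptV : ∀ t ∈ Set.Ioc (F₀ V) α,
          Bdiv φ (quantile Fs t) (quantile F₀ t) = Bdiv φ V (quantile F₀ t) := by
        intro t ht
        rw [quantile, hset1 t ht.1 ht.2, csInf_Ici]
      have hcalc : (∫ t in Set.Ioo (0:ℝ) 1, Bdiv φ (quantile Fs t) (quantile F₀ t))
          = ∫ t in Set.Ioc (F₀ V) α, Bdiv φ V (quantile F₀ t) := by
        rw [setIntegral_eq_of_subset_of_forall_diff_eq_zero measurableSet_Ioo hIocSubV hzero]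
        exact setIntegral_congr_fun measurableSet_Ioc hptV
      refine ⟨Fs, ⟨hFscdf, ?_⟩, hqFsα⟩
      rw [hcalc]
      exact hVmem.2
    obtain ⟨Fs, hFsball, hFsq⟩ := hattain
    have hmem : sInf S ∈ T := ⟨Fs, hFsball, hFsq.symm⟩
    refine ⟨?_, Fs, hFsball, by rw [hVeq, hFsq]⟩
    rw [hVeq]
    exact le_antisymm (csInf_le ⟨sInf S, hTlb⟩ hmem) (le_csInf ⟨sInf S, hmem⟩ hTlb)
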